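/- (Kreĭn) The Cayley transform S ↦ C(S) = (I−S)(I+S)^{-1}, dom(C(S)) = ran(I+S), is a bijection from the set of all positive, closed, densely defined symmetric operators S on a complex Hilbert space H onto the set of all symmetric contractions T with closed domain dom(T) ⊆ H satisfying that (I+T)dom(T) is dense in H; its inverse is T ↦ (I−T)(I+T)^{-1} with domain ran(I+T). -/
import Mathlib


open scoped InnerProductSpace ComplexOrder
open Filter Topology

noncomputable section

variable {H : Type*} [NormedAddCommGroup H] [InnerProductSpace ℂ H] [CompleteSpace H]

/-- `S` is a positive, closed, densely defined symmetric operator. -/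
def IsPosClosedDenselyDefined (S : H →ₗ.[ℂ] H) : Prop :=
  Dense (S.domain : Set H) ∧ S.IsClosed ∧
    (∀ h g : S.domain, ⟪S h, (g : H)⟫_ℂ = ⟪(h : H), S g⟫_ℂ) ∧
    ∀ h : S.domain, 0 ≤ ⟪S h, (h : H)⟫_ℂ

/-- `T` is a symmetric contraction with closed domain such that `(I+T) dom T` is dense. -/
def IsSymContrClosedDom (T : H →ₗ.[ℂ] H) : Prop :=
  IsClosed (T.domain : Set H) ∧ (∀ ξ : T.domain, ‖T ξ‖ ≤ ‖(ξ : H)‖) ∧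
    (∀ ξ η : T.domain, ⟪T ξ, (η : H)⟫_ℂ = ⟪(ξ : H), T η⟫_ℂ) ∧
    Dense (Set.range fun ξ : T.domain => (ξ : H) + T ξ)

/-- `T` is the Cayley transform of `S`: `dom T = ran (I+S)` and `T (I+S)h = (I−S)h`. -/
def IsCayleyTransformOf (S T : H →ₗ.[ℂ] H) : Prop :=
  (T.domain : Set H) = Set.range (fun h : S.domain => (h : H) + S h) ∧
    ∀ h : S.domain, ((h : H) + S h, (h : H) - S h) ∈ T.graph

/-- `S` is the inverse Cayley transform of `T`: `dom S = ran (I+T)` and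
`S (I+T)ξ = (I−T)ξ`. -/
def IsInverseCayleyTransformOf (T S : H →ₗ.[ℂ] H) : Prop :=
  (S.domain : Set H) = Set.range (fun ξ : T.domain => (ξ : H) + T ξ) ∧
    ∀ ξ : T.domain, ((ξ : H) + T ξ, (ξ : H) - T ξ) ∈ S.graph

namespace KreinAux

set_option linter.unusedSectionVars false

/-- The map `(x, y) ↦ (x + y, x - y)`. -/
def tau : (H × H) →ₗ[ℂ] (H × H) where
  toFun p := (p.1 + p.2, p.1 - p.2)
  map_add' p q := by
    refine Prod.ext ?_ ?_ <;> simp <;> abel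
  map_smul' c p := by
    refine Prod.ext ?_ ?_ <;> simp [smul_add, smul_sub]

@[simp] lemma tau_apply (p : H × H) : tau p = (p.1 + p.2, p.1 - p.2) := rfl

lemma mem_map_tau {A : H →ₗ.[ℂ] H} {x : H × H} :
    x ∈ A.graph.map tau ↔ ∃ h : A.domain, (h : H) + A h = x.1 ∧ (h : H) - A h = x.2 := by
  simp only [Submodule.mem_map, LinearPMap.mem_graph_iff]
  constructor
  · rintro ⟨⟨u, v⟩, ⟨h, h1, h2⟩, rfl⟩
    simp only at h1 h2
    exact ⟨h, by simp [h1, h2]⟩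
  · rintro ⟨h, h1, h2⟩
    exact ⟨((h : H), A h), ⟨h, rfl, rfl⟩, Prod.ext h1 h2⟩

/-- The Cayley-type transform `A ↦ (I - A)(I + A)⁻¹`. -/
def cay (A : H →ₗ.[ℂ] H) : H →ₗ.[ℂ] H := (A.graph.map tau).toLinearPMap

/-- The nondegeneracy condition needed for `cay` to behave well. -/
def Ker (A : H →ₗ.[ℂ] H) : Prop :=
  ∀ h : A.domain, (h : H) + A h = 0 → (h : H) - A h = 0

lemma ker_hg {A : H →ₗ.[ℂ] H} (hA : Ker A) :
    ∀ x ∈ A.graph.map tau, x.1 = 0 → x.2 = 0 := by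
  intro x hx h0
  obtain ⟨h, h1, h2⟩ := mem_map_tau.mp hx
  rw [← h2]
  exact hA h (h1.trans h0)

lemma cay_graph {A : H →ₗ.[ℂ] H} (hA : Ker A) :
    (cay A).graph = A.graph.map tau :=
  Submodule.toLinearPMap_graph_eq _ (ker_hg hA)

lemma cay_domain (A : H →ₗ.[ℂ] H) :
    ((cay A).domain : Set H) = Set.range (fun h : A.domain => (h : H) + A h) := by
  ext x
  simp only [cay, Submodule.toLinearPMap_domain, SetLike.mem_coe, Submodule.mem_map,
    Set.mem_range]
  constructor
  · rintro ⟨y, hy, rfl⟩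
    obtain ⟨h, h1, h2⟩ := mem_map_tau.mp hy
    exact ⟨h, h1⟩
  · rintro ⟨h, rfl⟩
    exact ⟨((h : H) + A h, (h : H) - A h), mem_map_tau.mpr ⟨h, rfl, rfl⟩, rfl⟩

lemma cay_mem_graph {A : H →ₗ.[ℂ] H} (hA : Ker A) (h : A.domain) :
    ((h : H) + A h, (h : H) - A h) ∈ (cay A).graph := by
  rw [cay_graph hA]
  exact mem_map_tau.mpr ⟨h, rfl, rfl⟩

lemma graph_right_unique (f : H →ₗ.[ℂ] H) {x y y' : H}
    (h : (x, y) ∈ f.graph) (h' : (x, y') ∈ f.graph) : y = y' := by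
  obtain ⟨a, ha1, ha2⟩ := f.mem_graph_iff.mp h
  obtain ⟨b, hb1, hb2⟩ := f.mem_graph_iff.mp h'
  simp only at ha1 ha2 hb1 hb2
  have hab : a = b := Subtype.ext (ha1.trans hb1.symm)
  rw [← show f a = y from ha2, ← show f b = y' from hb2, hab]

/-- Uniqueness: any `B` whose domain is `ran (I+A)` and whose graph contains the
Cayley pairs equals `cay A`. -/
lemma cay_unique {A B : H →ₗ.[ℂ] H} (hA : Ker A)
    (h1 : (B.domain : Set H) = Set.range (fun h : A.domain => (h : H) + A h))
    (h2 : ∀ h : A.domain, ((h : H) + A h, (h : H) - A h) ∈ B.graph) :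
    B = cay A := by
  refine LinearPMap.eq_of_eq_graph ?_
  rw [cay_graph hA]
  ext ⟨u, v⟩
  constructor
  · intro huv
    have hu : u ∈ (B.domain : Set H) := by
      obtain ⟨y, hy1, _⟩ := B.mem_graph_iff.mp huv
      simp only at hy1
      rw [← hy1]; exact y.2
    rw [h1] at hu
    obtain ⟨h, hh0⟩ := hu
    have hh : (h : H) + A h = u := hh0
    have := h2 h
    rw [hh] at this
    have hv : v = (h : H) - A h := graph_right_unique B huv this
    exact mem_map_tau.mpr ⟨h, hh, hv.symm⟩
  · intro huv
    obtain ⟨h, hh1, hh2⟩ := mem_map_tau.mp huv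
    have := h2 h
    rwa [hh1, hh2] at this

lemma cay_rep {A : H →ₗ.[ℂ] H} (hA : Ker A) (ξ : (cay A).domain) :
    ∃ h : A.domain, (h : H) + A h = (ξ : H) ∧ (h : H) - A h = cay A ξ := by
  have hm := (cay A).mem_graph ξ
  rw [cay_graph hA] at hm
  obtain ⟨h, h1, h2⟩ := mem_map_tau.mp hm
  exact ⟨h, h1, h2⟩

lemma inner_cross {a b c d : H} (h : ⟪b, c⟫_ℂ = ⟪a, d⟫_ℂ) :
    ⟪a - b, c + d⟫_ℂ = ⟪a + b, c - d⟫_ℂ := by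
  simp only [inner_sub_left, inner_add_left, inner_add_right, inner_sub_right]
  linear_combination (-2 : ℂ) * h

lemma re_inner_nonneg {S : H →ₗ.[ℂ] H}
    (hpos : ∀ h : S.domain, 0 ≤ ⟪S h, (h : H)⟫_ℂ) (h : S.domain) :
    0 ≤ RCLike.re ⟪(h : H), S h⟫_ℂ := by
  have h1 := hpos h
  rw [Complex.le_def] at h1
  have h2 : ⟪(h : H), S h⟫_ℂ = starRingEnd ℂ ⟪S h, (h : H)⟫_ℂ := (inner_conj_symm _ _).symm
  simp only [RCLike.re_to_complex, h2, Complex.conj_re]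
  simpa using h1.1

lemma norm_sq_ineq {S : H →ₗ.[ℂ] H}
    (hpos : ∀ h : S.domain, 0 ≤ ⟪S h, (h : H)⟫_ℂ) (h : S.domain) :
    ‖(h : H)‖ ^ 2 + ‖S h‖ ^ 2 ≤ ‖(h : H) + S h‖ ^ 2 := by
  rw [@norm_add_sq ℂ]
  nlinarith [re_inner_nonneg hpos h]

lemma norm_le1 {S : H →ₗ.[ℂ] H}
    (hpos : ∀ h : S.domain, 0 ≤ ⟪S h, (h : H)⟫_ℂ) (h : S.domain) :
    ‖(h : H)‖ ≤ ‖(h : H) + S h‖ := by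
  have := norm_sq_ineq hpos h
  nlinarith [norm_nonneg ((h : H) + S h), norm_nonneg (S h), norm_nonneg (h : H)]

lemma norm_le2 {S : H →ₗ.[ℂ] H}
    (hpos : ∀ h : S.domain, 0 ≤ ⟪S h, (h : H)⟫_ℂ) (h : S.domain) :
    ‖S h‖ ≤ ‖(h : H) + S h‖ := by
  have := norm_sq_ineq hpos h
  nlinarith [norm_nonneg ((h : H) + S h), norm_nonneg (S h), norm_nonneg (h : H)]

lemma norm_sub_le_norm_add {S : H →ₗ.[ℂ] H}
    (hpos : ∀ h : S.domain, 0 ≤ ⟪S h, (h : H)⟫_ℂ) (h : S.domain) :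
    ‖(h : H) - S h‖ ≤ ‖(h : H) + S h‖ := by
  have h1 := @norm_add_sq ℂ _ _ _ _ (h : H) (S h)
  have h2 := @norm_sub_sq ℂ _ _ _ _ (h : H) (S h)
  have h3 := re_inner_nonneg hpos h
  nlinarith [norm_nonneg ((h : H) + S h), norm_nonneg ((h : H) - S h)]

/-- `ran (I + S)` is closed when `S` is closed and `I + S` is expansive. -/
lemma closed_range_plus {S : H →ₗ.[ℂ] H} (hclosed : S.IsClosed)
    (h1 : ∀ h : S.domain, ‖(h : H)‖ ≤ ‖(h : H) + S h‖)
    (h2 : ∀ h : S.domain, ‖S h‖ ≤ ‖(h : H) + S h‖) :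
    IsClosed (Set.range fun h : S.domain => (h : H) + S h) := by
  haveI : CompleteSpace ↥(S.graph : Set (H × H)) := hclosed.completeSpace_coe
  set f : ↥(S.graph : Set (H × H)) → H := fun p => (p : H × H).1 + (p : H × H).2 with hf
  have hanti : AntilipschitzWith 1 f := by
    refine AntilipschitzWith.of_le_mul_dist fun x y => ?_
    obtain ⟨h, hh1, hh2⟩ := S.mem_graph_iff.mp
      (S.graph.sub_mem (x.2 : (x : H × H) ∈ S.graph) (y.2 : (y : H × H) ∈ S.graph))
    have hx : dist x y = max ‖((x : H × H) - y).1‖ ‖((x : H × H) - y).2‖ := by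
      rw [Subtype.dist_eq, dist_eq_norm, Prod.norm_def]
    have hfx : dist (f x) (f y) = ‖((x : H × H) - y).1 + ((x : H × H) - y).2‖ := by
      rw [dist_eq_norm]
      have hfe : f x - f y = ((x : H × H) - y).1 + ((x : H × H) - y).2 := by
        simp only [hf, Prod.fst_sub, Prod.snd_sub]
        abel
      rw [hfe]
    rw [hx, hfx, ← hh1, ← hh2, NNReal.coe_one, one_mul]
    exact max_le (h1 h) (h2 h)
  have huc : UniformContinuous f :=
    (uniformContinuous_fst.add uniformContinuous_snd).comp uniformContinuous_subtype_val
  have hcl := hanti.isClosed_range huc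
  have : Set.range f = Set.range fun h : S.domain => (h : H) + S h := by
    ext x
    constructor
    · rintro ⟨⟨⟨u, v⟩, huv⟩, rfl⟩
      obtain ⟨h, hh1, hh2⟩ := S.mem_graph_iff.mp huv
      simp only at hh1 hh2
      exact ⟨h, by simp [hf, hh1, hh2]⟩
    · rintro ⟨h, rfl⟩
      exact ⟨⟨((h : H), S h), S.mem_graph h⟩, rfl⟩
  rwa [this] at hcl

/-- The graph of a contraction with closed domain is closed. -/
lemma graph_closed_of_contraction {T : H →ₗ.[ℂ] H}
    (hdom : IsClosed (T.domain : Set H))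
    (hcontr : ∀ ξ : T.domain, ‖T ξ‖ ≤ ‖(ξ : H)‖) : T.IsClosed := by
  haveI : CompleteSpace ↥(T.domain : Set H) := hdom.completeSpace_coe
  set g : ↥(T.domain : Set H) → H × H := fun ξ => ((ξ : H), T (⟨ξ.1, ξ.2⟩ : T.domain)) with hg
  have hanti : AntilipschitzWith 1 g := by
    refine AntilipschitzWith.of_le_mul_dist fun x y => ?_
    rw [Subtype.dist_eq, dist_eq_norm, NNReal.coe_one, one_mul, dist_eq_norm, hg]
    calc ‖(x : H) - (y : H)‖
        ≤ max ‖(x : H) - (y : H)‖ ‖T ⟨x.1, x.2⟩ - T ⟨y.1, y.2⟩‖ := le_max_left _ _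
      _ = ‖(((x : H), T ⟨x.1, x.2⟩) : H × H) - ((y : H), T ⟨y.1, y.2⟩)‖ := by
          rw [Prod.norm_def]
          rfl
  have hlip : LipschitzWith 1 (fun ξ : T.domain => T ξ) := by
    refine LipschitzWith.of_dist_le_mul fun x y => ?_
    rw [NNReal.coe_one, one_mul, dist_eq_norm, Subtype.dist_eq, dist_eq_norm]
    have : T x - T y = T (x - y) := (map_sub T.toFun x y).symm
    rw [this]
    exact hcontr (x - y)
  have huc : UniformContinuous g :=
    UniformContinuous.prodMk uniformContinuous_subtype_val hlip.uniformContinuous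
  have hcl := hanti.isClosed_range huc
  have : Set.range g = (T.graph : Set (H × H)) := by
    ext ⟨u, v⟩
    constructor
    · rintro ⟨ξ, hξ⟩
      rw [← hξ]
      exact T.mem_graph ⟨ξ.1, ξ.2⟩
    · intro huv
      obtain ⟨ξ, h1, h2⟩ := T.mem_graph_iff.mp huv
      simp only at h1 h2
      exact ⟨ξ, by simp [hg, h1, h2]⟩
  rwa [this] at hcl

/-- `tau` as a homeomorphism. -/
def tauH : (H × H) ≃ₜ (H × H) where
  toFun p := (p.1 + p.2, p.1 - p.2)
  invFun p := ((2 : ℂ)⁻¹ • (p.1 + p.2), (2 : ℂ)⁻¹ • (p.1 - p.2))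
  left_inv p := by
    refine Prod.ext ?_ ?_ <;> simp <;> module
  right_inv p := by
    refine Prod.ext ?_ ?_ <;> simp <;> module
  continuous_toFun := by fun_prop
  continuous_invFun := by fun_prop

lemma cay_isClosed_of {T : H →ₗ.[ℂ] H} (hTclosed : T.IsClosed) (hker : Ker T) :
    (cay T).IsClosed := by
  unfold LinearPMap.IsClosed
  rw [cay_graph hker, Submodule.map_coe]
  have heq : ⇑(tau (H := H)) '' (T.graph : Set (H × H))
      = ⇑(tauH (H := H)) '' (T.graph : Set (H × H)) := rfl
  rw [heq]
  exact (Homeomorph.isClosedMap tauH) _ hTclosed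

lemma ker_of_pos {S : H →ₗ.[ℂ] H}
    (hpos : ∀ h : S.domain, 0 ≤ ⟪S h, (h : H)⟫_ℂ) : Ker S := by
  intro h h0
  have h1 := norm_le1 hpos h
  have h2 := norm_le2 hpos h
  rw [h0, norm_zero] at h1 h2
  have e1 : (h : H) = 0 := norm_le_zero_iff.mp h1
  have e2 : S h = 0 := norm_le_zero_iff.mp h2
  rw [e1, e2, sub_zero]

lemma ker_of_symm_dense {T : H →ₗ.[ℂ] H}
    (hsym : ∀ ξ η : T.domain, ⟪T ξ, (η : H)⟫_ℂ = ⟪(ξ : H), T η⟫_ℂ)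
    (hdense : Dense (Set.range fun ξ : T.domain => (ξ : H) + T ξ)) : Ker T := by
  intro ξ hξ0
  have hzero : (ξ : H) = 0 := by
    have hfun : (fun y => ⟪(ξ : H), y⟫_ℂ) = fun _ => 0 := by
      refine Continuous.ext_on hdense (continuous_const.inner continuous_id)
        continuous_const ?_
      rintro y ⟨η, rfl⟩
      show ⟪(ξ : H), (η : H) + T η⟫_ℂ = 0
      rw [inner_add_right, ← hsym ξ η, ← inner_add_left, hξ0, inner_zero_left]
    have := congrFun hfun (ξ : H)
    exact inner_self_eq_zero.mp this
  have hξz : ξ = 0 := Subtype.ext hzero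
  rw [hzero, hξz]
  simp

lemma cay_symm {A : H →ₗ.[ℂ] H} (hA : Ker A)
    (hsymA : ∀ h g : A.domain, ⟪A h, (g : H)⟫_ℂ = ⟪(h : H), A g⟫_ℂ) :
    ∀ ξ η : (cay A).domain, ⟪cay A ξ, (η : H)⟫_ℂ = ⟪(ξ : H), cay A η⟫_ℂ := by
  intro ξ η
  obtain ⟨h, h1, h2⟩ := cay_rep hA ξ
  obtain ⟨g, g1, g2⟩ := cay_rep hA η
  rw [← h1, ← h2, ← g1, ← g2]
  exact inner_cross (hsymA h g)

lemma pos_of_contraction {T : H →ₗ.[ℂ] H}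
    (hsym : ∀ ξ η : T.domain, ⟪T ξ, (η : H)⟫_ℂ = ⟪(ξ : H), T η⟫_ℂ)
    (hcontr : ∀ ξ : T.domain, ‖T ξ‖ ≤ ‖(ξ : H)‖) (ξ : T.domain) :
    0 ≤ ⟪(ξ : H) - T ξ, (ξ : H) + T ξ⟫_ℂ := by
  have hexp : ⟪(ξ : H) - T ξ, (ξ : H) + T ξ⟫_ℂ = ((‖(ξ : H)‖ ^ 2 - ‖T ξ‖ ^ 2 : ℝ) : ℂ) := by
    simp only [inner_sub_left, inner_add_right]
    rw [hsym ξ ξ, inner_self_eq_norm_sq_to_K, inner_self_eq_norm_sq_to_K]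
    push_cast
    ring_nf
    norm_cast
  rw [hexp]
  refine Complex.zero_le_real.mpr ?_
  nlinarith [hcontr ξ, norm_nonneg (T ξ), norm_nonneg (ξ : H)]

lemma dense_two_smul {s : Set H} (hdense : Dense s) :
    Dense ((fun x => (2 : ℂ) • x) '' s) := by
  set e : H ≃ₜ H := Homeomorph.smulOfNeZero (2 : ℂ) two_ne_zero with he
  have hcoe : (fun x : H => (2 : ℂ) • x) = ⇑e := rfl
  rw [hcoe, dense_iff_closure_eq]
  rw [dense_iff_closure_eq] at hdense
  calc closure (⇑e '' s) = ⇑e '' closure s := (e.image_closure s).symm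
    _ = ⇑e '' Set.univ := by rw [hdense]
    _ = Set.univ := by rw [Set.image_univ]; exact e.surjective.range_eq

lemma cayley_iff_inverse (S T : H →ₗ.[ℂ] H) :
    IsCayleyTransformOf S T ↔ IsInverseCayleyTransformOf T S := by
  constructor
  · rintro ⟨hd, hg⟩
    have key : ∀ ξ : T.domain, ∃ h : S.domain,
        (h : H) + S h = (ξ : H) ∧ T ξ = (h : H) - S h := by
      intro ξ
      have hξ : (ξ : H) ∈ (T.domain : Set H) := ξ.2
      rw [hd] at hξ
      obtain ⟨h, hh⟩ := hξ
      have hh' : (h : H) + S h = (ξ : H) := hh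
      have hmem := hg h
      rw [hh'] at hmem
      exact ⟨h, hh', graph_right_unique T (T.mem_graph ξ) hmem⟩
    constructor
    · ext x
      constructor
      · intro hx
        let h0 : S.domain := (2 : ℂ)⁻¹ • ⟨x, hx⟩
        have hmem : (h0 : H) + S h0 ∈ (T.domain : Set H) := by
          rw [hd]; exact ⟨h0, rfl⟩
        refine ⟨⟨(h0 : H) + S h0, hmem⟩, ?_⟩
        have hTv : T ⟨(h0 : H) + S h0, hmem⟩ = (h0 : H) - S h0 :=
          graph_right_unique T (T.mem_graph _) (hg h0)
        show ((h0 : H) + S h0) + T ⟨(h0 : H) + S h0, hmem⟩ = x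
        rw [hTv]
        have hc0 : (h0 : H) = (2 : ℂ)⁻¹ • x := rfl
        have hS0 : S h0 = (2 : ℂ)⁻¹ • S ⟨x, hx⟩ := by
          show S ((2 : ℂ)⁻¹ • (⟨x, hx⟩ : S.domain)) = _
          rw [S.map_smul]
        rw [hc0, hS0]
        module
      · rintro ⟨ξ, hξ⟩
        obtain ⟨h, hh1, hh2⟩ := key ξ
        have he : (ξ : H) + T ξ = (2 : ℂ) • (h : H) := by
          rw [← hh1, hh2]; module
        have hx : (ξ : H) + T ξ = x := hξ
        rw [← hx, he]
        exact S.domain.smul_mem _ h.2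
    · intro ξ
      obtain ⟨h, hh1, hh2⟩ := key ξ
      have e1 : (ξ : H) + T ξ = (2 : ℂ) • (h : H) := by rw [← hh1, hh2]; module
      have e2 : (ξ : H) - T ξ = (2 : ℂ) • (S h) := by rw [← hh1, hh2]; module
      have he : ((ξ : H) + T ξ, (ξ : H) - T ξ) = (2 : ℂ) • (((h : H), S h) : H × H) := by
        rw [e1, e2]; rfl
      rw [he]
      exact S.graph.smul_mem _ (S.mem_graph h)
  · rintro ⟨hd, hg⟩
    have key : ∀ h : S.domain, ∃ ξ : T.domain,
        (ξ : H) + T ξ = (h : H) ∧ S h = (ξ : H) - T ξ := by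
      intro h
      have hh : (h : H) ∈ (S.domain : Set H) := h.2
      rw [hd] at hh
      obtain ⟨ξ, hξ⟩ := hh
      have hξ' : (ξ : H) + T ξ = (h : H) := hξ
      have hmem := hg ξ
      rw [hξ'] at hmem
      exact ⟨ξ, hξ', graph_right_unique S (S.mem_graph h) hmem⟩
    constructor
    · ext x
      constructor
      · intro hx
        have hmem := hg ⟨x, hx⟩
        have hdom : x + T ⟨x, hx⟩ ∈ S.domain := by
          obtain ⟨y, hy1, _⟩ := S.mem_graph_iff.mp hmem
          simp only at hy1
          rw [← hy1]; exact y.2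
        let h0 : S.domain := (2 : ℂ)⁻¹ • ⟨x + T ⟨x, hx⟩, hdom⟩
        refine ⟨h0, ?_⟩
        show (h0 : H) + S h0 = x
        have hS0 : S h0 = (2 : ℂ)⁻¹ • (x - T ⟨x, hx⟩) := by
          have hval := graph_right_unique S (S.mem_graph ⟨x + T ⟨x, hx⟩, hdom⟩) hmem
          show S ((2 : ℂ)⁻¹ • (⟨x + T ⟨x, hx⟩, hdom⟩ : S.domain)) = _
          rw [S.map_smul, hval]
        have hc0 : (h0 : H) = (2 : ℂ)⁻¹ • (x + T ⟨x, hx⟩) := rfl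
        rw [hc0, hS0]
        module
      · rintro ⟨h, hh⟩
        obtain ⟨ξ, hξ1, hξ2⟩ := key h
        have he : (h : H) + S h = (2 : ℂ) • (ξ : H) := by rw [← hξ1, hξ2]; module
        have hx : (h : H) + S h = x := hh
        rw [← hx, he]
        exact T.domain.smul_mem _ ξ.2
    · intro h
      obtain ⟨ξ, hξ1, hξ2⟩ := key h
      have e1 : (h : H) + S h = (2 : ℂ) • (ξ : H) := by rw [← hξ1, hξ2]; module
      have e2 : (h : H) - S h = (2 : ℂ) • (T ξ) := by rw [← hξ1, hξ2]; module
      have he : ((h : H) + S h, (h : H) - S h) = (2 : ℂ) • (((ξ : H), T ξ) : H × H) := by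
        rw [e1, e2]; rfl
      rw [he]
      exact T.graph.smul_mem _ (T.mem_graph ξ)

end KreinAux

open KreinAux in
theorem statement5 :
    (∀ S : H →ₗ.[ℂ] H, IsPosClosedDenselyDefined S →
      ∃! T : H →ₗ.[ℂ] H, IsSymContrClosedDom T ∧ IsCayleyTransformOf S T) ∧
    (∀ T : H →ₗ.[ℂ] H, IsSymContrClosedDom T →
      ∃! S : H →ₗ.[ℂ] H, IsPosClosedDenselyDefined S ∧ IsCayleyTransformOf S T) ∧
    (∀ S T : H →ₗ.[ℂ] H, IsPosClosedDenselyDefined S → IsSymContrClosedDom T →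
      (IsCayleyTransformOf S T ↔ IsInverseCayleyTransformOf T S)) := by
  refine ⟨?_, ?_, fun S T _ _ => cayley_iff_inverse S T⟩
  · rintro S ⟨hdense, hclosed, hsym, hpos⟩
    have hker : Ker S := ker_of_pos hpos
    refine ⟨cay S, ⟨⟨?_, ?_, ?_, ?_⟩, cay_domain S, fun h => cay_mem_graph hker h⟩, ?_⟩
    · -- closed domain
      rw [cay_domain S]
      exact closed_range_plus hclosed (norm_le1 hpos) (norm_le2 hpos)
    · -- contraction
      intro ξ
      obtain ⟨h, h1, h2⟩ := cay_rep hker ξ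
      rw [← h1, ← h2]
      exact norm_sub_le_norm_add hpos h
    · -- symmetric
      exact cay_symm hker hsym
    · -- density of (I + cay S)
      have heq : (Set.range fun ξ : (cay S).domain => (ξ : H) + cay S ξ)
          = (fun x => (2 : ℂ) • x) '' (S.domain : Set H) := by
        ext x
        constructor
        · rintro ⟨ξ, rfl⟩
          obtain ⟨h, h1, h2⟩ := cay_rep hker ξ
          refine ⟨(h : H), h.2, ?_⟩
          show (2 : ℂ) • (h : H) = (ξ : H) + cay S ξ
          rw [← h1, ← h2]
          module
        · rintro ⟨a, ha, rfl⟩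
          have hm : ((⟨a, ha⟩ : S.domain) : H) + S ⟨a, ha⟩ ∈ ((cay S).domain : Set H) := by
            rw [cay_domain S]
            exact ⟨⟨a, ha⟩, rfl⟩
          refine ⟨⟨_, hm⟩, ?_⟩
          have hTv : cay S ⟨_, hm⟩ = ((⟨a, ha⟩ : S.domain) : H) - S ⟨a, ha⟩ :=
            graph_right_unique (cay S) ((cay S).mem_graph _) (cay_mem_graph hker ⟨a, ha⟩)
          show (((⟨a, ha⟩ : S.domain) : H) + S ⟨a, ha⟩) + cay S ⟨_, hm⟩ = (2 : ℂ) • a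
          rw [hTv]
          show (a + S ⟨a, ha⟩) + (a - S ⟨a, ha⟩) = (2 : ℂ) • a
          module
      rw [heq]
      exact dense_two_smul hdense
    · rintro T' ⟨_, hc1, hc2⟩
      exact cay_unique hker hc1 hc2
  · rintro T ⟨hdom, hcontr, hsym, hdense⟩
    have hker : Ker T := ker_of_symm_dense hsym hdense
    refine ⟨cay T, ⟨⟨?_, ?_, ?_, ?_⟩,
      (cayley_iff_inverse (cay T) T).mpr ⟨cay_domain T, fun ξ => cay_mem_graph hker ξ⟩⟩, ?_⟩
    · -- densely defined
      rw [cay_domain T]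
      exact hdense
    · -- closed
      exact cay_isClosed_of (graph_closed_of_contraction hdom hcontr) hker
    · -- symmetric
      exact cay_symm hker hsym
    · -- positive
      intro u
      obtain ⟨ξ, h1, h2⟩ := cay_rep hker u
      rw [← h1, ← h2]
      exact pos_of_contraction hsym hcontr ξ
    · rintro S' ⟨_, hc⟩
      have hi := (cayley_iff_inverse S' T).mp hc
      exact cay_unique hker hi.1 hi.2
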